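/- For Z = ∑_{r=1}^{⌊n/2⌋} e_{n-r+1,r} and ξ ∈ 𝔫 (strictly upper triangular), the bracket [ξ, Z] = 0 implies ξ = 0; hence no nontrivial upper unipotent element commutes infinitesimally with the anti-diagonal part of f. -/
import Mathlib


open Matrix

/-- The anti-diagonal element `Z = ∑_{r=1}^{⌊n/2⌋} e_{n-r+1,r}`: in 0-based indices the
entries at positions `(n-1-j, j)` with `2j < n-1` equal `1`. -/
def zMat (n : ℕ) : Matrix (Fin n) (Fin n) ℝ :=
  Matrix.of fun i j => if (i : ℕ) = n - 1 - (j : ℕ) ∧ 2 * (j : ℕ) < n - 1 then 1 else 0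

lemma mul_zMat_apply (n : ℕ) (ξ : Matrix (Fin n) (Fin n) ℝ) (p q : Fin n) :
    (ξ * zMat n) p q =
      if 2 * (q : ℕ) < n - 1 then ξ p ⟨n - 1 - (q : ℕ), by have := q.isLt; omega⟩ else 0 := by
  rw [Matrix.mul_apply]
  by_cases hq : 2 * (q : ℕ) < n - 1
  · simp only [zMat, Matrix.of_apply, hq, and_true, if_pos hq]
    rw [Finset.sum_eq_single (⟨n - 1 - (q : ℕ), by have := q.isLt; omega⟩ : Fin n)]
    · simp
    · intro k _ hk
      rw [if_neg, mul_zero]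
      intro h; exact hk (Fin.ext h)
    · intro h; exact absurd (Finset.mem_univ _) h
  · simp only [zMat, Matrix.of_apply, hq, and_false, if_false, mul_zero,
      Finset.sum_const_zero]

lemma zMat_mul_apply (n : ℕ) (ξ : Matrix (Fin n) (Fin n) ℝ) (p q : Fin n) :
    (zMat n * ξ) p q =
      if 2 * (n - 1 - (p : ℕ)) < n - 1 then
        ξ ⟨n - 1 - (p : ℕ), by have := p.isLt; omega⟩ q else 0 := by
  rw [Matrix.mul_apply]
  by_cases hp : 2 * (n - 1 - (p : ℕ)) < n - 1
  · rw [if_pos hp]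
    rw [Finset.sum_eq_single (⟨n - 1 - (p : ℕ), by have := p.isLt; omega⟩ : Fin n)]
    · simp only [zMat, Matrix.of_apply]
      rw [if_pos, one_mul]
      constructor
      · show (p:ℕ) = n - 1 - (n - 1 - (p:ℕ)); have := p.isLt; omega
      · show 2 * (n - 1 - (p:ℕ)) < n - 1; exact hp
    · intro k _ hk
      simp only [zMat, Matrix.of_apply]
      rw [if_neg, zero_mul]
      rintro ⟨h1, h2⟩
      apply hk
      apply Fin.ext
      show (k:ℕ) = n - 1 - (p:ℕ)
      have := p.isLt; have := k.isLt
      omega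
    · intro h; exact absurd (Finset.mem_univ _) h
  · rw [if_neg hp]
    apply Finset.sum_eq_zero
    intro k _
    simp only [zMat, Matrix.of_apply]
    rw [if_neg, zero_mul]
    rintro ⟨h1, h2⟩
    have := p.isLt; have := k.isLt
    omega

/-- for strictly upper triangular `ξ`, `[ξ, Z] = 0` implies `ξ = 0`;
i.e. the map `ξ ↦ [ξ, Z]` is injective on `𝔫`. -/
theorem bracket_with_Z_injective (n : ℕ) (ξ : Matrix (Fin n) (Fin n) ℝ)
    (hξ : ∀ i j : Fin n, (j : ℕ) ≤ (i : ℕ) → ξ i j = 0)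
    (hbr : ξ * zMat n - zMat n * ξ = 0) :
    ξ = 0 := by
  have hbr' : ∀ p q : Fin n, (ξ * zMat n) p q = (zMat n * ξ) p q := by
    intro p q
    have := congrFun (congrFun hbr p) q
    simp only [Matrix.sub_apply, Matrix.zero_apply, sub_eq_zero] at this
    exact this
  ext i j
  simp only [Matrix.zero_apply]
  rcases le_or_gt (j : ℕ) (i : ℕ) with hij | hij
  · exact hξ i j hij
  have hin := i.isLt
  have hjn := j.isLt
  rcases lt_or_ge (n - 1) (2 * (j : ℕ)) with hj | hj
  · -- evaluate at (i, ⟨n-1-j⟩)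
    have h := hbr' i ⟨n - 1 - (j : ℕ), by omega⟩
    rw [mul_zMat_apply, zMat_mul_apply] at h
    rw [if_pos (by simp; omega)] at h
    have hval : (⟨n - 1 - (n - 1 - (j : ℕ)), by omega⟩ : Fin n) = j := by
      apply Fin.ext; simp; omega
    rw [hval] at h
    rw [h]
    split
    · exact hξ _ _ (by simp; omega)
    · rfl
  · -- evaluate at (⟨n-1-i⟩, j)
    have h := hbr' ⟨n - 1 - (i : ℕ), by omega⟩ j
    rw [mul_zMat_apply, zMat_mul_apply] at h
    simp only [Fin.val_mk] at h
    rw [if_pos (show 2 * (n - 1 - (n - 1 - (i : ℕ))) < n - 1 by omega)] at h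
    have hval : (⟨n - 1 - (n - 1 - (i : ℕ)), by omega⟩ : Fin n) = i := by
      apply Fin.ext; simp; omega
    rw [hval] at h
    rw [← h]
    split
    · exact hξ _ _ (by simp; omega)
    · rfl
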